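/- Let k(x,x') = exp(−‖x−x'‖²/(2ℓ²)) be the squared exponential kernel on ℝ^D with length scale ℓ > 0. For s drawn from N(0, ℓ^{-2} I_D) and b uniform on [0, 2π], define φ_{s,b}(x) = √2 cos(sᵀx + b). Then E_{s,b}[φ_{s,b}(x) φ_{s,b}(x')] = k(x, x') for all x, x' ∈ ℝ^D. -/

import Mathlib

open MeasureTheory ProbabilityTheory Real
open scoped NNReal

/-!
Averaging over the uniform phase `b` kills the term `cos (2b + sᵀx + sᵀx')` of the
product-to-sum formula and leaves `cos (sᵀ(x - x'))`. Its Gaussian expectation is the real part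
of the characteristic function of `N(0, ℓ⁻² I)` at `x - x'`, which is `exp (-‖x - x'‖² / (2ℓ²))`.
-/

lemma integral_cos_two_mul_add_eq_zero (φ : ℝ) : ∫ b in 0..2 * π, cos (2 * b + φ) = 0 := by
  rw [intervalIntegral.integral_comp_mul_add cos two_ne_zero, integral_cos,
    show 2 * (2 * π) + φ = φ + (2 : ℕ) * (2 * π) by ring, sin_add_nat_mul_two_pi]
  simp

lemma integral_sqrt_two_cos_mul_sqrt_two_cos_uniform (a c : ℝ) :
    ∫ b, (√2 * cos (a + b)) * (√2 * cos (c + b))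
      ∂(ENNReal.ofReal (2 * π)⁻¹ • volume.restrict (Set.Icc 0 (2 * π))) = cos (a - c) := by
  have product_to_sum (b : ℝ) : (√2 * cos (a + b)) * (√2 * cos (c + b))
      = cos (a - c) + cos (2 * b + (a + c)) := by
    rw [mul_mul_mul_comm, mul_self_sqrt zero_le_two, ← mul_assoc, two_mul_cos_mul_cos]
    ring_nf
  have hπ : 0 < 2 * π := by positivity
  simp_rw [product_to_sum]
  rw [integral_smul_measure, integral_Icc_eq_integral_Ioc,
    ← intervalIntegral.integral_of_le hπ.le, intervalIntegral.integral_add intervalIntegrable_const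
      ((by fun_prop : Continuous fun b => cos (2 * b + (a + c))).intervalIntegrable _ _),
    integral_cos_two_mul_add_eq_zero, intervalIntegral.integral_const,
    ENNReal.toReal_ofReal (by positivity), smul_eq_mul, smul_eq_mul]
  field_simp
  ring

lemma integral_cos_inner_eq_re_charFun {E : Type*} [NormedAddCommGroup E] [InnerProductSpace ℝ E]
    [MeasurableSpace E] [BorelSpace E] (μ : Measure E) [IsFiniteMeasure μ] (t : E) :
    ∫ x, cos (inner ℝ x t) ∂μ = (charFun μ t).re := by
  rw [charFun_apply, ← RCLike.re_to_complex, ← integral_re]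
  · simp [Complex.exp_ofReal_mul_I_re]
  exact (integrable_const (1 : ℂ)).mono (by fun_prop)
    (.of_forall fun x => by simp [Complex.norm_exp_ofReal_mul_I])

lemma charFun_map_pi_gaussianReal {ι : Type*} [Fintype ι] (v : ℝ≥0) (t : EuclideanSpace ℝ ι) :
    charFun ((Measure.pi fun _ : ι => gaussianReal 0 v).map (WithLp.toLp 2)) t
      = Complex.exp (-(v * ‖t‖ ^ 2 / 2)) := by
  simp_rw [charFun_pi, charFun_gaussianReal, ← Complex.exp_sum, ← Complex.ofReal_pow,
    EuclideanSpace.real_norm_sq_eq]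
  simp [Finset.sum_div, Finset.mul_sum]

lemma integral_cos_sum_mul_pi_gaussianReal {ι : Type*} [Fintype ι] (v : ℝ≥0)
    (t : EuclideanSpace ℝ ι) :
    ∫ s : ι → ℝ, cos (∑ i, s i * t i) ∂(Measure.pi fun _ => gaussianReal 0 v)
      = exp (-(v * ‖t‖ ^ 2 / 2)) := by
  have sum_eq_inner (s : ι → ℝ) : ∑ i, s i * t i = inner ℝ (WithLp.toLp 2 s) t := by
    simp [PiLp.inner_apply, mul_comm]
  simp_rw [sum_eq_inner]
  rw [← MeasurableEquiv.coe_toLp, ← integral_map_equiv _ fun y => cos (inner ℝ y t),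
    MeasurableEquiv.coe_toLp, integral_cos_inner_eq_re_charFun, charFun_map_pi_gaussianReal]
  exact_mod_cast Complex.exp_ofReal_re _

theorem rff_unbiased_general (D : ℕ) (ℓ : ℝ) (x x' : EuclideanSpace ℝ (Fin D)) :
    (∫ s : Fin D → ℝ,
        (∫ b : ℝ,
            (Real.sqrt 2 * Real.cos ((∑ i, s i * x i) + b)) *
              (Real.sqrt 2 * Real.cos ((∑ i, s i * x' i) + b))
          ∂(ENNReal.ofReal (2 * π)⁻¹ • volume.restrict (Set.Icc 0 (2 * π))))
      ∂(Measure.pi fun _ : Fin D => gaussianReal 0 ((ℓ ^ 2)⁻¹).toNNReal))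
      = Real.exp (-‖x - x'‖ ^ 2 / (2 * ℓ ^ 2)) := by
  have sum_sub (s : Fin D → ℝ) : ∑ i, s i * x i - ∑ i, s i * x' i = ∑ i, s i * (x - x') i := by
    simp [← Finset.sum_sub_distrib, mul_sub]
  simp_rw [integral_sqrt_two_cos_mul_sqrt_two_cos_uniform, sum_sub,
    integral_cos_sum_mul_pi_gaussianReal, Real.coe_toNNReal _ (inv_nonneg.2 (sq_nonneg ℓ))]
  congr 1
  ring

theorem rff_unbiased (D : ℕ) (ℓ : ℝ) (hℓ : 0 < ℓ) (x x' : EuclideanSpace ℝ (Fin D)) :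
    (∫ s : Fin D → ℝ,
        (∫ b : ℝ,
            (Real.sqrt 2 * Real.cos ((∑ i, s i * x i) + b)) *
              (Real.sqrt 2 * Real.cos ((∑ i, s i * x' i) + b))
          ∂(ENNReal.ofReal (2 * π)⁻¹ • volume.restrict (Set.Icc 0 (2 * π))))
      ∂(Measure.pi fun _ : Fin D => gaussianReal 0 ((ℓ ^ 2)⁻¹).toNNReal))
      = Real.exp (-‖x - x'‖ ^ 2 / (2 * ℓ ^ 2)) :=
  rff_unbiased_general D ℓ x x'
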